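/- Define Ω_n(c) (for n ∈ ℕ, 0 ≤ c < 1, φ ∈ ℝ) as the 4-fold integral -(1/(2π)²)·∫₀^∞∫₀^∞ e^{-(v₁²+v₂²)/4} ∫₀^{2π}∫₀^{2π} e^{-(c v₁ v₂/2) cos(q₁-q₂+φ)} · i^n (v₁ cos q₁ + v₂ cos q₂)^n · e^{i(q₁-q₂)} dq₁ dq₂ dv₁ dv₂. Then |Ω_n| < 2^{3n/2 - 1} · n · π · Γ(n/2) / (1-c)^{1+n/2} for all n ≥ 1. -/

import Mathlib

/-!
Taking absolute values, `e^{-(c v₁ v₂/2) cos ψ} ≤ e^{c (v₁² + v₂²)/4}` and Cauchy–Schwarz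
`|v₁ cos q₁ + v₂ cos q₂| ≤ r √(cos² q₁ + cos² q₂)` (with `r² = v₁² + v₂²`) separate the angular
and the radial variables. The angular bound `2^{n/2} (cos² q₁ + cos² q₂ + 2)/4` integrates to
`3π² 2^{n/2}`, the radial one `r^n e^{-(1-c) r²/4}` over the quadrant is computed in polar coordinates as
`(π/4) (4/(1-c))^{1+n/2} Γ(1+n/2)`, and the product is `3/4` of the claimed bound.
-/

open MeasureTheory Real

/-- The coefficient `Ω_n` of the power-series expansion, as a 4-fold integral (Eq. (28)). -/
noncomputable def OmegaCoeff (n : ℕ) (c φ : ℝ) : ℂ :=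
  -(1/(2*π)^2 : ℂ) * ∫ v₁ in Set.Ioi (0:ℝ), ∫ v₂ in Set.Ioi (0:ℝ),
    ∫ q₁ in Set.Ioo (0:ℝ) (2*π), ∫ q₂ in Set.Ioo (0:ℝ) (2*π),
      Complex.exp (-(((v₁^2 + v₂^2)/4 : ℝ) : ℂ)) *
      Complex.exp (-(((c*v₁*v₂/2) * Real.cos (q₁ - q₂ + φ) : ℝ) : ℂ)) *
      Complex.I^n * (((v₁ * Real.cos q₁ + v₂ * Real.cos q₂ : ℝ) : ℂ))^n *
      Complex.exp (Complex.I * (((q₁ - q₂ : ℝ)) : ℂ))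

open Set

theorem norm_integral_integral_le {α β E : Type*} [MeasurableSpace α] [MeasurableSpace β]
    [NormedAddCommGroup E] [NormedSpace ℝ E] {μ : Measure α} {ν : Measure β} [SFinite μ]
    [SFinite ν] {f : α → β → E} {g : α → β → ℝ} (hg : Integrable (Function.uncurry g) (μ.prod ν))
    (hfg : ∀ᵐ x ∂μ, ∀ᵐ y ∂ν, ‖f x y‖ ≤ g x y) :
    ‖∫ x, ∫ y, f x y ∂ν ∂μ‖ ≤ ∫ x, ∫ y, g x y ∂ν ∂μ := by
  refine norm_integral_le_of_norm_le hg.integral_prod_left ?_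
  filter_upwards [hfg, hg.prod_right_ae] with x hx hgx
  exact norm_integral_le_of_norm_le hgx hx

theorem integral_comp_abs_abs {g : ℝ → ℝ → ℝ}
    (hg : Integrable fun p : ℝ × ℝ => g |p.1| |p.2|) :
    ∫ p : ℝ × ℝ, g |p.1| |p.2| = 4 * ∫ x in Ioi 0, ∫ y in Ioi 0, g x y := by
  rw [Measure.volume_eq_prod] at hg ⊢
  rw [integral_prod _ hg]
  simp only [integral_comp_abs (f := g _), integral_const_mul,
    integral_comp_abs (f := fun x => ∫ y in Ioi 0, g x y)]
  ring

theorem integral_sqrt_pow_mul_exp_neg_mul (n : ℕ) {a : ℝ} (ha : 0 < a) :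
    ∫ p : ℝ × ℝ, √(p.1 ^ 2 + p.2 ^ 2) ^ n * exp (-a * (p.1 ^ 2 + p.2 ^ 2)) =
      π * a ^ (-((n : ℝ) + 2) / 2) * Gamma (((n : ℝ) + 2) / 2) := by
  rw [← Complex.volume_preserving_equiv_real_prod.integral_comp'
    (fun p : ℝ × ℝ => √(p.1 ^ 2 + p.2 ^ 2) ^ n * exp (-a * (p.1 ^ 2 + p.2 ^ 2)))]
  have h := Complex.integral_rpow_mul_exp_neg_mul_rpow (p := 2) (q := n) one_le_two
    (by linarith [n.cast_nonneg (α := ℝ)]) ha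
  simp only [Complex.measurableEquivRealProd_apply, ← Complex.norm_eq_sqrt_sq_add_sq]
  refine (integral_congr_ae (ae_of_all _ fun z => ?_)).trans (h.trans (by ring))
  rw [rpow_natCast, rpow_two, Complex.sq_norm, Complex.normSq_apply]
  simp only [sq]

theorem integrable_sqrt_pow_mul_exp_neg_mul (n : ℕ) {a : ℝ} (ha : 0 < a) :
    Integrable fun p : ℝ × ℝ => √(p.1 ^ 2 + p.2 ^ 2) ^ n * exp (-a * (p.1 ^ 2 + p.2 ^ 2)) := by
  refine Integrable.of_integral_ne_zero ?_
  rw [integral_sqrt_pow_mul_exp_neg_mul n ha]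
  have : 0 < Gamma (((n : ℝ) + 2) / 2) := Gamma_pos_of_pos (by positivity)
  positivity

theorem integral_Ioi_Ioi_sqrt_pow_mul_exp_neg_mul (n : ℕ) {a : ℝ} (ha : 0 < a) :
    ∫ v₁ in Ioi 0, ∫ v₂ in Ioi 0, √(v₁ ^ 2 + v₂ ^ 2) ^ n * exp (-a * (v₁ ^ 2 + v₂ ^ 2)) =
      π / 4 * a ^ (-((n : ℝ) + 2) / 2) * Gamma (((n : ℝ) + 2) / 2) := by
  have h := integral_comp_abs_abs
    (g := fun v₁ v₂ => √(v₁ ^ 2 + v₂ ^ 2) ^ n * exp (-a * (v₁ ^ 2 + v₂ ^ 2)))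
    (by simpa only [sq_abs] using integrable_sqrt_pow_mul_exp_neg_mul n ha)
  simp only [sq_abs, integral_sqrt_pow_mul_exp_neg_mul n ha] at h
  linarith

theorem setIntegral_Ioo_zero_two_pi_add_cos_sq (b : ℝ) :
    ∫ q in Ioo 0 (2 * π), (b + cos q ^ 2) = 2 * π * b + π := by
  rw [← integral_Ioc_eq_integral_Ioo, ← intervalIntegral.integral_of_le two_pi_pos.le,
    intervalIntegral.integral_add intervalIntegrable_const
      ((by fun_prop : Continuous fun q => cos q ^ 2).intervalIntegrable _ _), integral_cos_sq]
  simp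

theorem integral_Ioo_Ioo_cos_sq_add_cos_sq :
    ∫ q₁ in Ioo 0 (2 * π), ∫ q₂ in Ioo 0 (2 * π), (cos q₁ ^ 2 + cos q₂ ^ 2 + 2) / 4 =
      3 * π ^ 2 := by
  have inner (q₁ : ℝ) : ∫ q₂ in Ioo 0 (2 * π), (cos q₁ ^ 2 + cos q₂ ^ 2 + 2) / 4 =
      π / 2 * (5 / 2 + cos q₁ ^ 2) := by
    simp_rw [add_right_comm (cos q₁ ^ 2), integral_div, setIntegral_Ioo_zero_two_pi_add_cos_sq]
    ring
  simp_rw [inner, integral_const_mul, setIntegral_Ioo_zero_two_pi_add_cos_sq]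
  ring

theorem abs_mul_add_mul_le_sqrt_mul_sqrt (a₁ a₂ b₁ b₂ : ℝ) :
    |a₁ * b₁ + a₂ * b₂| ≤ √(a₁ ^ 2 + a₂ ^ 2) * √(b₁ ^ 2 + b₂ ^ 2) := by
  rw [← sqrt_mul (by positivity)]
  exact abs_le_sqrt (by nlinarith [sq_nonneg (a₁ * b₂ - a₂ * b₁)])

/-- The slack in `√(y/2) ^ n ≤ √(y/2) ≤ (y/2 + 1)/2` is what makes the final estimate strict:
with `√y ^ n ≤ √2 ^ n` alone the argument reproduces the claimed bound exactly. -/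
theorem sqrt_pow_le_of_le_two {y : ℝ} (hy₀ : 0 ≤ y) (hy₂ : y ≤ 2) {n : ℕ} (hn : 1 ≤ n) :
    √y ^ n ≤ √2 ^ n * ((y + 2) / 4) := by
  have hx : √(y / 2) ≤ 1 := sqrt_le_one.mpr (by linarith)
  calc √y ^ n = √2 ^ n * √(y / 2) ^ n := by
        rw [← mul_pow, ← sqrt_mul zero_le_two]; ring_nf
    _ ≤ √2 ^ n * √(y / 2) := by
        gcongr; exact pow_le_of_le_one (sqrt_nonneg _) hx (by omega)
    _ ≤ √2 ^ n * ((y + 2) / 4) := by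
        gcongr; nlinarith [sq_sqrt (by positivity : 0 ≤ y / 2), sqrt_nonneg (y / 2)]

theorem exp_mul_exp_le_exp {c v₁ v₂ : ℝ} (θ : ℝ) (hc : 0 ≤ c) (hv₁ : 0 ≤ v₁) (hv₂ : 0 ≤ v₂) :
    exp (-((v₁ ^ 2 + v₂ ^ 2) / 4)) * exp (-(c * v₁ * v₂ / 2 * cos θ)) ≤
      exp (-((1 - c) / 4) * (v₁ ^ 2 + v₂ ^ 2)) := by
  rw [← exp_add, exp_le_exp]
  have h₁ : 0 ≤ c * v₁ * v₂ * (1 + cos θ) :=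
    mul_nonneg (mul_nonneg (mul_nonneg hc hv₁) hv₂) (by linarith [neg_one_le_cos θ])
  nlinarith [mul_nonneg hc (sq_nonneg (v₁ - v₂))]

noncomputable def omegaIntegrand (n : ℕ) (c φ v₁ v₂ q₁ q₂ : ℝ) : ℂ :=
  Complex.exp (-(((v₁ ^ 2 + v₂ ^ 2) / 4 : ℝ) : ℂ)) *
    Complex.exp (-((c * v₁ * v₂ / 2 * cos (q₁ - q₂ + φ) : ℝ) : ℂ)) *
    Complex.I ^ n * ((v₁ * cos q₁ + v₂ * cos q₂ : ℝ) : ℂ) ^ n *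
    Complex.exp (Complex.I * ((q₁ - q₂ : ℝ) : ℂ))

theorem OmegaCoeff_eq (n : ℕ) (c φ : ℝ) :
    OmegaCoeff n c φ = -(1 / (2 * π) ^ 2 : ℂ) * ∫ v₁ in Ioi 0, ∫ v₂ in Ioi 0,
      ∫ q₁ in Ioo 0 (2 * π), ∫ q₂ in Ioo 0 (2 * π), omegaIntegrand n c φ v₁ v₂ q₁ q₂ :=
  rfl

theorem norm_omegaIntegrand (n : ℕ) (c φ v₁ v₂ q₁ q₂ : ℝ) :
    ‖omegaIntegrand n c φ v₁ v₂ q₁ q₂‖ =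
      exp (-((v₁ ^ 2 + v₂ ^ 2) / 4)) * exp (-(c * v₁ * v₂ / 2 * cos (q₁ - q₂ + φ))) *
        |v₁ * cos q₁ + v₂ * cos q₂| ^ n := by
  simp only [omegaIntegrand, norm_mul, norm_pow, Complex.norm_exp, Complex.norm_I,
    Complex.norm_real, Real.norm_eq_abs, one_pow, mul_one, Complex.neg_re, Complex.ofReal_re,
    Complex.mul_re, Complex.I_re, Complex.I_im, Complex.ofReal_im, zero_mul, mul_zero,
    sub_zero, exp_zero]

theorem norm_omegaIntegrand_le {n : ℕ} (hn : 1 ≤ n) {c v₁ v₂ : ℝ} (φ q₁ q₂ : ℝ) (hc : 0 ≤ c)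
    (hv₁ : 0 ≤ v₁) (hv₂ : 0 ≤ v₂) :
    ‖omegaIntegrand n c φ v₁ v₂ q₁ q₂‖ ≤
      √2 ^ n * (√(v₁ ^ 2 + v₂ ^ 2) ^ n * exp (-((1 - c) / 4) * (v₁ ^ 2 + v₂ ^ 2))) *
        ((cos q₁ ^ 2 + cos q₂ ^ 2 + 2) / 4) := by
  have hpoly : |v₁ * cos q₁ + v₂ * cos q₂| ^ n ≤
      √(v₁ ^ 2 + v₂ ^ 2) ^ n * (√2 ^ n * ((cos q₁ ^ 2 + cos q₂ ^ 2 + 2) / 4)) := by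
    calc |v₁ * cos q₁ + v₂ * cos q₂| ^ n
        ≤ (√(v₁ ^ 2 + v₂ ^ 2) * √(cos q₁ ^ 2 + cos q₂ ^ 2)) ^ n := by
          gcongr; exact abs_mul_add_mul_le_sqrt_mul_sqrt _ _ _ _
      _ ≤ √(v₁ ^ 2 + v₂ ^ 2) ^ n * (√2 ^ n * ((cos q₁ ^ 2 + cos q₂ ^ 2 + 2) / 4)) := by
          rw [mul_pow]
          gcongr
          exact sqrt_pow_le_of_le_two (by positivity)
            (by linarith [cos_sq_le_one q₁, cos_sq_le_one q₂]) hn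
  rw [norm_omegaIntegrand]
  calc _ ≤ exp (-((1 - c) / 4) * (v₁ ^ 2 + v₂ ^ 2)) *
        (√(v₁ ^ 2 + v₂ ^ 2) ^ n * (√2 ^ n * ((cos q₁ ^ 2 + cos q₂ ^ 2 + 2) / 4))) :=
        mul_le_mul (exp_mul_exp_le_exp _ hc hv₁ hv₂) hpoly (by positivity) (by positivity)
    _ = _ := by ring

theorem norm_integral_omegaIntegrand_le {n : ℕ} (hn : 1 ≤ n) {c v₁ v₂ : ℝ} (φ : ℝ) (hc : 0 ≤ c)
    (hv₁ : 0 ≤ v₁) (hv₂ : 0 ≤ v₂) :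
    ‖∫ q₁ in Ioo 0 (2 * π), ∫ q₂ in Ioo 0 (2 * π), omegaIntegrand n c φ v₁ v₂ q₁ q₂‖ ≤
      3 * π ^ 2 * √2 ^ n *
        (√(v₁ ^ 2 + v₂ ^ 2) ^ n * exp (-((1 - c) / 4) * (v₁ ^ 2 + v₂ ^ 2))) := by
  set M := √2 ^ n * (√(v₁ ^ 2 + v₂ ^ 2) ^ n * exp (-((1 - c) / 4) * (v₁ ^ 2 + v₂ ^ 2)))
  have hint : Integrable (Function.uncurry fun q₁ q₂ => M * ((cos q₁ ^ 2 + cos q₂ ^ 2 + 2) / 4))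
      ((volume.restrict (Ioo 0 (2 * π))).prod (volume.restrict (Ioo 0 (2 * π)))) := by
    rw [Measure.prod_restrict, ← Measure.volume_eq_prod]
    exact ((Continuous.continuousOn (by fun_prop)).integrableOn_compact
      (isCompact_Icc.prod isCompact_Icc)).mono_set
        (prod_mono Ioo_subset_Icc_self Ioo_subset_Icc_self)
  calc _ ≤ ∫ q₁ in Ioo 0 (2 * π), ∫ q₂ in Ioo 0 (2 * π),
        M * ((cos q₁ ^ 2 + cos q₂ ^ 2 + 2) / 4) :=
        norm_integral_integral_le hint (ae_of_all _ fun q₁ => ae_of_all _ fun q₂ =>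
          norm_omegaIntegrand_le hn φ q₁ q₂ hc hv₁ hv₂)
    _ = _ := by
        simp_rw [integral_const_mul, integral_Ioo_Ioo_cos_sq_add_cos_sq, M]
        ring

theorem norm_OmegaCoeff_le {n : ℕ} (hn : 1 ≤ n) {c : ℝ} (φ : ℝ) (hc0 : 0 ≤ c) (hc1 : c < 1) :
    ‖OmegaCoeff n c φ‖ ≤ 1 / (2 * π) ^ 2 * (3 * π ^ 2 * √2 ^ n *
      (π / 4 * ((1 - c) / 4) ^ (-((n : ℝ) + 2) / 2) * Gamma (((n : ℝ) + 2) / 2))) := by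
  have ha : 0 < (1 - c) / 4 := by linarith
  have hv : ‖∫ v₁ in Ioi 0, ∫ v₂ in Ioi 0, ∫ q₁ in Ioo 0 (2 * π), ∫ q₂ in Ioo 0 (2 * π),
      omegaIntegrand n c φ v₁ v₂ q₁ q₂‖ ≤ ∫ v₁ in Ioi 0, ∫ v₂ in Ioi 0, 3 * π ^ 2 * √2 ^ n *
        (√(v₁ ^ 2 + v₂ ^ 2) ^ n * exp (-((1 - c) / 4) * (v₁ ^ 2 + v₂ ^ 2))) := by
    refine norm_integral_integral_le ?_ ?_
    · rw [Measure.prod_restrict, ← Measure.volume_eq_prod]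
      exact ((integrable_sqrt_pow_mul_exp_neg_mul n ha).const_mul _).integrableOn
    filter_upwards [ae_restrict_mem measurableSet_Ioi] with v₁ hv₁
    filter_upwards [ae_restrict_mem measurableSet_Ioi] with v₂ hv₂
    exact norm_integral_omegaIntegrand_le hn φ hc0 hv₁.le hv₂.le
  simp_rw [integral_const_mul, integral_Ioi_Ioi_sqrt_pow_mul_exp_neg_mul n ha] at hv
  rw [OmegaCoeff_eq, norm_mul, norm_neg,
    show (1 / (2 * π) ^ 2 : ℂ) = ((1 / (2 * π) ^ 2 : ℝ) : ℂ) by push_cast; rfl,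
    Complex.norm_of_nonneg (by positivity)]
  gcongr

theorem one_div_two_pi_sq_mul_eq {n : ℕ} (hn : 1 ≤ n) {c : ℝ} (hc : c < 1) :
    1 / (2 * π) ^ 2 * (3 * π ^ 2 * √2 ^ n *
      (π / 4 * ((1 - c) / 4) ^ (-((n : ℝ) + 2) / 2) * Gamma (((n : ℝ) + 2) / 2))) =
    3 / 4 * (2 ^ (3 * (n : ℝ) / 2 - 1) * n * π * Gamma ((n : ℝ) / 2) /
      (1 - c) ^ (1 + (n : ℝ) / 2)) := by
  have hd : 0 < 1 - c := by linarith
  set s : ℝ := (n : ℝ) / 2 with hs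
  have hs0 : s ≠ 0 := by positivity
  have h2 : √2 ^ n = (2 : ℝ) ^ s := by
    rw [sqrt_eq_rpow, ← rpow_natCast, ← rpow_mul zero_le_two, hs]; ring_nf
  have hΓ : Gamma (((n : ℝ) + 2) / 2) = s * Gamma s := by
    rw [show ((n : ℝ) + 2) / 2 = s + 1 by ring, Gamma_add_one hs0]
  have hd4 : ((1 - c) / 4) ^ (-((n : ℝ) + 2) / 2) =
      (2 : ℝ) ^ (2 * (s + 1)) / (1 - c) ^ (1 + s) := by
    rw [show -((n : ℝ) + 2) / 2 = -(1 + s) by ring, rpow_neg (by positivity),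
      div_rpow hd.le (by norm_num), show (4 : ℝ) = 2 ^ (2 : ℝ) by norm_num, ← rpow_mul zero_le_two]
    field_simp
    ring_nf
  have h8 : (2 : ℝ) ^ s * 2 ^ (2 * (s + 1)) = 8 * 2 ^ (3 * s - 1) := by
    rw [← rpow_add two_pos, show (8 : ℝ) = 2 ^ (3 : ℝ) by norm_num, ← rpow_add two_pos]
    ring_nf
  rw [h2, hΓ, hd4, show 3 * (n : ℝ) / 2 - 1 = 3 * s - 1 by ring, show (n : ℝ) = 2 * s by ring]
  field_simp
  linear_combination Gamma s * h8

/-- The bound (29) on the coefficients `Ω_n`. -/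
theorem OmegaCoeff_bound (n : ℕ) (hn : 1 ≤ n) (c φ : ℝ) (hc0 : 0 ≤ c) (hc1 : c < 1) :
    ‖OmegaCoeff n c φ‖ <
      (2:ℝ)^((3*(n:ℝ))/2 - 1) * n * π * Real.Gamma ((n:ℝ)/2) /
        (1 - c)^(1 + (n:ℝ)/2) := by
  have hd : 0 < 1 - c := by linarith
  have hn₀ : (0 : ℝ) < n := by exact_mod_cast hn
  refine (norm_OmegaCoeff_le hn φ hc0 hc1).trans_lt ?_
  rw [one_div_two_pi_sq_mul_eq hn hc1]
  exact mul_lt_of_lt_one_left (by positivity) (by norm_num)
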